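/- There exists a constant C > 0, depending only on a, α, M and sup|f|, such that for every T ∈ (0,∞] and every admissible solution u of the 1D diffusion equation on [0,T), one has ∫₀¹ u(t,x)² dx ≤ max( ∫₀¹ u(0,x)² dx , C ) for all t ∈ [0,T); in particular the L² norm of u(t,·) is bounded uniformly in time. -/

import Mathlib

/-!
The energy `E(t) = ∫₀¹ u²` satisfies
`E' = 2 (M - U) (a ∫ u³ + α ∫ f u) - 2 E - 2 ∫ u_x²`,
the diffusion term having been integrated by parts using periodicity. With `S = max u(t, ·)`,
the one-dimensional estimates `∫ u³ ≤ S E`, `E ≤ S M` and `S² ≤ M² + 2 ∫ |u u_x|` together with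
Cauchy–Schwarz `(∫ |u u_x|)² ≤ E ∫ u_x²` show that the dissipation `∫ u_x²` dominates the
cubic reaction term once `E` is large: `E ≥ 2 M²` forces `S ≥ 2 M`, hence `S³ ≤ 16 M ∫ u_x²`.
So `E' < 0` whenever `E ≥ energyBound`, and `E` can never cross above `max (E 0) energyBound`.
-/

open MeasureTheory Set Function Filter

theorem le_max_of_hasDerivAt_neg {E : ℝ → ℝ} {a b C : ℝ} (hab : a ≤ b)
    (hE : ContinuousOn E (Icc a b)) (hE' : ∀ t ∈ Ioo a b, C ≤ E t → ∃ e < 0, HasDerivAt E e t) :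
    E b ≤ max (E a) C := by
  by_contra! hlt
  set B := max (E a) C
  set A := Icc a b ∩ E ⁻¹' Iic B
  have hA : IsClosed A := hE.preimage_isClosed_of_isClosed isClosed_Icc isClosed_Iic
  have hbdd : BddAbove A := ⟨b, fun t ht => ht.1.2⟩
  have hsA : sSup A ∈ A := hA.csSup_mem ⟨a, left_mem_Icc.2 hab, (le_max_left _ _ : E a ≤ B)⟩ hbdd
  have hsb : sSup A < b := hsA.1.2.lt_of_ne fun h => by
    have := hsA.2
    simp only [h, mem_preimage, mem_Iic] at this
    linarith
  have habove : ∀ t ∈ Ioc (sSup A) b, B < E t := fun t ht =>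
    not_le.1 fun h => (le_csSup hbdd ⟨⟨hsA.1.1.trans ht.1.le, ht.2⟩, h⟩).not_gt ht.1
  have hanti : StrictAntiOn E (Icc (sSup A) b) := by
    refine strictAntiOn_of_deriv_neg (convex_Icc _ b) (hE.mono (Icc_subset_Icc_left hsA.1.1))
      fun t ht => ?_
    rw [interior_Icc] at ht
    obtain ⟨e, he, hd⟩ := hE' t ⟨hsA.1.1.trans_lt ht.1, ht.2⟩
      ((le_max_right _ _).trans (habove t (Ioo_subset_Ioc_self ht)).le)
    rwa [hd.deriv]
  have := hanti (left_mem_Icc.2 hsb.le) (right_mem_Icc.2 hsb.le) hsb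
  linarith [show E (sSup A) ≤ B from hsA.2]

theorem sq_integral_mul_le_integral_sq_mul_integral_sq {f g : ℝ → ℝ} {a b : ℝ} (hab : a ≤ b)
    (hf : Continuous f) (hg : Continuous g) :
    (∫ x in a..b, f x * g x) ^ 2 ≤ (∫ x in a..b, f x ^ 2) * ∫ x in a..b, g x ^ 2 := by
  have hi : ∀ {h : ℝ → ℝ}, Continuous h → IntervalIntegrable h volume a b :=
    fun hh => hh.intervalIntegrable a b
  have hquad : ∀ l : ℝ, 0 ≤ (∫ x in a..b, f x ^ 2) * (l * l)
      + 2 * (∫ x in a..b, f x * g x) * l + ∫ x in a..b, g x ^ 2 := by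
    intro l
    calc (0 : ℝ) ≤ ∫ x in a..b, (l * f x + g x) ^ 2 :=
          intervalIntegral.integral_nonneg hab fun x _ => sq_nonneg _
      _ = ∫ x in a..b, (l * l) * f x ^ 2 + (2 * l) * (f x * g x) + g x ^ 2 :=
        intervalIntegral.integral_congr fun x _ => by ring
      _ = _ := by
        rw [intervalIntegral.integral_add (hi (by fun_prop)) (hi (by fun_prop)),
          intervalIntegral.integral_add (hi (by fun_prop)) (hi (by fun_prop)),
          intervalIntegral.integral_const_mul, intervalIntegral.integral_const_mul]
        ring
  have := discrim_le_zero hquad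
  unfold discrim at this
  nlinarith

theorem sub_le_integral_abs_deriv {g g' : ℝ → ℝ} {a b p q : ℝ}
    (hg : ∀ x, HasDerivAt g (g' x) x) (hg' : Continuous g') (hp : p ∈ Icc a b)
    (hq : q ∈ Icc a b) : g q - g p ≤ ∫ x in a..b, |g' x| := by
  have hab : a ≤ b := hp.1.trans hp.2
  calc g q - g p = ∫ x in p..q, g' x :=
        (intervalIntegral.integral_eq_sub_of_hasDerivAt (fun x _ => hg x)
          (hg'.intervalIntegrable _ _)).symm
    _ ≤ |(∫ x in p..q, |g' x|)| := (le_abs_self _).trans (by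
        simpa only [Real.norm_eq_abs] using
          intervalIntegral.norm_integral_le_abs_integral_norm (f := g') (μ := volume))
    _ ≤ |(∫ x in a..b, |g' x|)| :=
        intervalIntegral.abs_integral_mono_interval
          (uIoc_subset_uIoc_of_uIcc_subset_uIcc (uIcc_subset_uIcc (Icc_subset_uIcc hp)
            (Icc_subset_uIcc hq)))
          (ae_of_all _ fun _ => abs_nonneg _) (hg'.abs.intervalIntegrable _ _)
    _ = ∫ x in a..b, |g' x| :=
        abs_of_nonneg (intervalIntegral.integral_nonneg hab fun _ _ => abs_nonneg _)

theorem integral_pow_succ_le_mul_integral_pow {v : ℝ → ℝ} {a b S : ℝ} (hab : a ≤ b)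
    (hv : Continuous v) (hv_nonneg : ∀ x ∈ Icc a b, 0 ≤ v x) (hvS : ∀ x ∈ Icc a b, v x ≤ S)
    (n : ℕ) : ∫ x in a..b, v x ^ (n + 1) ≤ S * ∫ x in a..b, v x ^ n := by
  rw [← intervalIntegral.integral_const_mul]
  refine intervalIntegral.integral_mono_on hab ((hv.pow _).intervalIntegrable a b)
    ((continuous_const.mul (hv.pow n)).intervalIntegrable a b) fun x hx => ?_
  rw [pow_succ']
  exact mul_le_mul_of_nonneg_right (hvS x hx) (pow_nonneg (hv_nonneg x hx) n)

theorem sq_le_sq_integral_add_integral_abs_mul_deriv {v : ℝ → ℝ} (hv : ContDiff ℝ 1 v)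
    (hv_nonneg : ∀ x, 0 ≤ v x) {x : ℝ} (hx : x ∈ Icc (0:ℝ) 1) :
    v x ^ 2 ≤ (∫ y in (0:ℝ)..1, v y) ^ 2 + 2 * ∫ y in (0:ℝ)..1, |v y * deriv v y| := by
  obtain ⟨xmin, hxmin, hmin⟩ :=
    isCompact_Icc.exists_isMinOn (nonempty_Icc.2 zero_le_one) hv.continuous.continuousOn
  have hmin_le : v xmin ≤ ∫ y in (0:ℝ)..1, v y := by
    simpa using intervalIntegral.integral_mono_on (μ := volume) zero_le_one
      intervalIntegrable_const (hv.continuous.intervalIntegrable 0 1) fun y hy => hmin hy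
  have h := sub_le_integral_abs_deriv (g := fun y => v y ^ 2)
    (fun y => ((hv.differentiable one_ne_zero y).hasDerivAt.pow 2).congr_deriv (by ring))
    (by fun_prop : Continuous fun y => 2 * v y * deriv v y) hxmin hx
  have h2 : ∫ y in (0:ℝ)..1, |2 * v y * deriv v y|
      = 2 * ∫ y in (0:ℝ)..1, |v y * deriv v y| := by
    rw [← intervalIntegral.integral_const_mul]
    exact intervalIntegral.integral_congr fun y _ => by simp only [mul_assoc, abs_mul, abs_two]
  rw [h2] at h
  nlinarith [hv_nonneg xmin]

theorem Function.Periodic.abs_le_of_iSup_abs_le {f : ℝ → ℝ} {c F : ℝ} (hper : Periodic f c)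
    (hc : c ≠ 0) (hf : Continuous f) (hF : (⨆ x, |f x|) ≤ F) (x : ℝ) : |f x| ≤ F := by
  obtain ⟨B, hB⟩ := isBounded_iff_forall_norm_le.1 (hper.isBounded_of_continuous hc hf)
  exact (le_ciSup ⟨B, by rintro _ ⟨y, rfl⟩; exact hB _ ⟨y, rfl⟩⟩ x).trans hF

theorem Function.Periodic.integral_mul_iteratedDeriv_two {v : ℝ → ℝ} {c : ℝ}
    (hper : Periodic v c) (hv : ContDiff ℝ 2 v) (a : ℝ) :
    ∫ x in a..a + c, v x * iteratedDeriv 2 v x = -∫ x in a..a + c, deriv v x ^ 2 := by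
  have hv' : ContDiff ℝ 1 (deriv v) := hv.deriv'
  have hdv_per : deriv v (a + c) = deriv v a := by
    rw [← deriv_comp_add_const, show (fun x => v (x + c)) = v from funext hper]
  rw [iteratedDeriv_succ, iteratedDeriv_one,
    intervalIntegral.integral_mul_deriv_eq_deriv_mul
      (fun x _ => (hv.differentiable two_ne_zero x).hasDerivAt)
      (fun x _ => (hv'.differentiable one_ne_zero x).hasDerivAt)
      (hv'.continuous.intervalIntegrable _ _)
      ((hv'.continuous_deriv le_rfl).intervalIntegrable _ _),
    hper a, hdv_per, sub_self, zero_sub]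
  simp only [sq]

theorem hasDerivAt_apply_left_of_differentiableAt_uncurry {w : ℝ → ℝ → ℝ} {t x : ℝ}
    (hw : DifferentiableAt ℝ (uncurry w) (t, x)) :
    HasDerivAt (fun s => w s x) (fderiv ℝ (uncurry w) (t, x) (1, 0)) t :=
  hw.hasFDerivAt.comp_hasDerivAt (f := fun s => (s, x)) t
    ((hasDerivAt_id t).prodMk (hasDerivAt_const t x))

theorem continuousOn_intervalIntegral_of_continuousOn_prod {w : ℝ → ℝ → ℝ} {K : Set ℝ}
    {a b : ℝ} (hw : ContinuousOn (uncurry w) (K ×ˢ univ)) :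
    ContinuousOn (fun t => ∫ x in a..b, w t x) K := by
  rw [continuousOn_iff_continuous_domRestrict]
  exact intervalIntegral.continuous_parametric_intervalIntegral_of_continuous'
    (f := fun (t : K) x => w t x)
    (hw.comp_continuous (f := fun p : K × ℝ => ((p.1 : ℝ), p.2)) (by fun_prop)
      fun p => ⟨p.1.2, mem_univ _⟩) a b

theorem hasDerivAt_intervalIntegral_of_contDiffOn {w : ℝ → ℝ → ℝ} {I : Set ℝ} {a b t₀ : ℝ}
    (hI : IsOpen I) (hw : ContDiffOn ℝ 1 (uncurry w) (I ×ˢ univ)) (ht₀ : t₀ ∈ I) :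
    HasDerivAt (fun t => ∫ x in a..b, w t x) (∫ x in a..b, deriv (fun s => w s x) t₀) t₀ := by
  have hopen : IsOpen (I ×ˢ (univ : Set ℝ)) := hI.prod isOpen_univ
  set wt : ℝ × ℝ → ℝ := fun p => fderiv ℝ (uncurry w) p (1, 0)
  have hwt : ContinuousOn wt (I ×ˢ univ) :=
    (hw.continuousOn_fderiv_of_isOpen hopen le_rfl).clm_apply continuousOn_const
  have hderiv : ∀ s ∈ I, ∀ x, HasDerivAt (fun s => w s x) (wt (s, x)) s := fun s hs x =>
    hasDerivAt_apply_left_of_differentiableAt_uncurry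
      ((hw.differentiableOn one_ne_zero).differentiableAt (hopen.mem_nhds ⟨hs, mem_univ x⟩))
  have hslice : ∀ s ∈ I, Continuous (w s) := fun s hs =>
    hw.continuousOn.comp_continuous (f := fun x => (s, x)) (by fun_prop) fun x => ⟨hs, mem_univ x⟩
  obtain ⟨ε, hε, hεI⟩ := Metric.nhds_basis_closedBall.mem_iff.1 (hI.mem_nhds ht₀)
  obtain ⟨B, hB⟩ := ((isCompact_closedBall t₀ ε).prod isCompact_uIcc).exists_bound_of_continuousOn
    (hwt.mono (prod_mono hεI (subset_univ (uIcc a b))))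
  have key := intervalIntegral.hasDerivAt_integral_of_dominated_loc_of_deriv_le
    (μ := volume) (F' := fun s x => wt (s, x)) (bound := fun _ => B)
    (Metric.closedBall_mem_nhds t₀ hε)
    (Eventually.mono (hI.mem_nhds ht₀) fun s hs => (hslice s hs).aestronglyMeasurable)
    ((hslice t₀ ht₀).intervalIntegrable a b)
    (hwt.comp_continuous (f := fun x => (t₀, x)) (by fun_prop)
      fun x => ⟨ht₀, mem_univ x⟩).aestronglyMeasurable
    (ae_of_all _ fun x hx s hs => hB (s, x) ⟨hs, uIoc_subset_uIcc hx⟩)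
    intervalIntegrable_const
    (ae_of_all _ fun x _ s hs => hderiv s (hεI hs) x)
  rw [intervalIntegral.integral_congr fun x _ => (hderiv t₀ ht₀ x).deriv]
  exact key.2

theorem hasDerivAt_intervalIntegral_sq_of_contDiffOn {u : ℝ → ℝ → ℝ} {I : Set ℝ} {a b t : ℝ}
    (hI : IsOpen I) (hu : ContDiffOn ℝ 1 (uncurry u) (I ×ˢ univ)) (ht : t ∈ I) :
    HasDerivAt (fun s => ∫ x in a..b, u s x ^ 2)
      (∫ x in a..b, 2 * u t x * deriv (fun s => u s x) t) t := by
  convert hasDerivAt_intervalIntegral_of_contDiffOn (w := fun t x => u t x ^ 2) hI (hu.pow 2) ht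
    using 1
  refine intervalIntegral.integral_congr fun x _ => ?_
  have hd := hasDerivAt_apply_left_of_differentiableAt_uncurry ((hu.differentiableOn
    one_ne_zero).differentiableAt ((hI.prod isOpen_univ).mem_nhds ⟨ht, mem_univ x⟩))
  rw [(hd.fun_pow 2).deriv, hd.deriv]
  push_cast
  ring

noncomputable def energyBound (a α M F : ℝ) : ℝ :=
  1 + 2 * M ^ 2 + 16 * |a| * M ^ 4 + |α| * |F| * M ^ 2

theorem energyBound_pos (a α M F : ℝ) : 0 < energyBound a α M F := by
  unfold energyBound; positivity

theorem energy_rate_neg {a α M F S U E P Q I ψ : ℝ} (hS : 0 ≤ S) (hU : 0 ≤ U) (hUM : U ≤ M)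
    (hI : 0 ≤ I) (hIS : I ≤ S * E) (hψ : |ψ| ≤ |F| * M) (hES : E ≤ S * M)
    (hSP : S ^ 2 ≤ M ^ 2 + 2 * P) (hPQ : P ^ 2 ≤ E * Q) (hEC : energyBound a α M F ≤ E) :
    2 * (M - U) * (a * I + α * ψ) - 2 * E - 2 * Q < 0 := by
  unfold energyBound at hEC
  have haM : 0 ≤ |a| * M ^ 4 := by positivity
  have hαFM : 0 ≤ |α| * |F| * M ^ 2 := by positivity
  have hE : 0 < E := by nlinarith
  have hM : 0 < M := by nlinarith
  have hMS : 2 * M ≤ S := by nlinarith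
  have hSP' : S ^ 2 ≤ 4 * P := by nlinarith
  have hQ0 : 0 ≤ Q := by nlinarith [sq_nonneg P]
  have hSQ : S ^ 3 ≤ 16 * M * Q := by
    have hS4 : S * S ^ 3 ≤ S * (16 * M * Q) :=
      calc S * S ^ 3 = (S ^ 2) ^ 2 := by ring
        _ ≤ (4 * P) ^ 2 := pow_le_pow_left₀ (sq_nonneg S) hSP' 2
        _ ≤ 16 * (E * Q) := by nlinarith
        _ ≤ 16 * (S * M * Q) := by gcongr
        _ = S * (16 * M * Q) := by ring
    exact le_of_mul_le_mul_left hS4 (by linarith)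
  have haS : 16 * |a| * M ^ 3 ≤ S := by nlinarith
  have hQ : |a| * M * S * E ≤ Q := by
    have h1 : |a| * M * S * E ≤ |a| * M ^ 2 * S ^ 2 := by
      have := mul_le_mul_of_nonneg_left hES (by positivity : 0 ≤ |a| * M * S)
      nlinarith
    have h2 : 16 * M * (|a| * M ^ 2 * S ^ 2) ≤ 16 * M * Q := by
      nlinarith [mul_le_mul_of_nonneg_right haS (sq_nonneg S)]
    nlinarith
  have hreaction : (M - U) * (a * I + α * ψ) ≤ M * (|a| * (S * E) + |α| * (|F| * M)) := by
    have h1 : a * I ≤ |a| * (S * E) :=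
      (mul_le_mul_of_nonneg_right (le_abs_self a) hI).trans
        (mul_le_mul_of_nonneg_left hIS (abs_nonneg a))
    have h2 : α * ψ ≤ |α| * (|F| * M) :=
      calc α * ψ ≤ |α| * |ψ| := (le_abs_self _).trans (abs_mul α ψ).le
        _ ≤ |α| * (|F| * M) := mul_le_mul_of_nonneg_left hψ (abs_nonneg α)
    have h3 : 0 ≤ |a| * (S * E) + |α| * (|F| * M) := by positivity
    nlinarith
  nlinarith

theorem Function.Periodic.integral_mul_reaction_diffusion {v f : ℝ → ℝ} (hper : Periodic v 1)
    (hv : ContDiff ℝ 2 v) (hf : Continuous f) (a α M U : ℝ) :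
    ∫ x in (0:ℝ)..1, 2 * v x * ((a * v x ^ 2 + α * f x) * (M - U) - v x + iteratedDeriv 2 v x)
      = 2 * (M - U) * (a * (∫ x in (0:ℝ)..1, v x ^ 3) + α * ∫ x in (0:ℝ)..1, f x * v x)
        - 2 * (∫ x in (0:ℝ)..1, v x ^ 2) - 2 * ∫ x in (0:ℝ)..1, deriv v x ^ 2 := by
  have hv₀ : Continuous v := hv.continuous
  have hv₂ : Continuous (iteratedDeriv 2 v) := hv.continuous_iteratedDeriv 2 le_rfl
  have hi : ∀ {h : ℝ → ℝ}, Continuous h → IntervalIntegrable h volume 0 1 :=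
    fun hh => hh.intervalIntegrable 0 1
  have hibp := hper.integral_mul_iteratedDeriv_two hv 0
  rw [zero_add] at hibp
  calc _ = ∫ x in (0:ℝ)..1, (2 * (M - U) * a * v x ^ 3 + 2 * (M - U) * α * (f x * v x)
          - 2 * v x ^ 2) + 2 * (v x * iteratedDeriv 2 v x) :=
        intervalIntegral.integral_congr fun x _ => by ring
    _ = _ := by
      rw [intervalIntegral.integral_add (hi (by fun_prop)) (hi (by fun_prop)),
        intervalIntegral.integral_sub (hi (by fun_prop)) (hi (by fun_prop)),
        intervalIntegral.integral_add (hi (by fun_prop)) (hi (by fun_prop)),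
        intervalIntegral.integral_const_mul, intervalIntegral.integral_const_mul,
        intervalIntegral.integral_const_mul, intervalIntegral.integral_const_mul, hibp]
      ring

theorem Function.Periodic.integral_mul_reaction_diffusion_neg {v f : ℝ → ℝ} {a α M F : ℝ}
    (hper : Periodic v 1) (hv : ContDiff ℝ 2 v) (hv_nonneg : ∀ x, 0 ≤ v x)
    (hvM : ∫ x in (0:ℝ)..1, v x ≤ M) (hf : Continuous f) (hfF : ∀ x, |f x| ≤ F)
    (hE : energyBound a α M F ≤ ∫ x in (0:ℝ)..1, v x ^ 2) :
    ∫ x in (0:ℝ)..1, 2 * v x * ((a * v x ^ 2 + α * f x) * (M - ∫ y in (0:ℝ)..1, v y) - v x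
      + iteratedDeriv 2 v x) < 0 := by
  have hv₀ : Continuous v := hv.continuous
  obtain ⟨xmax, hxmax, hmax⟩ :=
    isCompact_Icc.exists_isMaxOn (nonempty_Icc.2 zero_le_one) hv₀.continuousOn
  have hU : 0 ≤ ∫ x in (0:ℝ)..1, v x :=
    intervalIntegral.integral_nonneg zero_le_one fun x _ => hv_nonneg x
  have hpow := integral_pow_succ_le_mul_integral_pow zero_le_one hv₀ (fun x _ => hv_nonneg x)
    fun x hx => hmax hx
  have hES : ∫ x in (0:ℝ)..1, v x ^ 2 ≤ v xmax * M :=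
    calc _ ≤ v xmax * ∫ x in (0:ℝ)..1, v x := by simpa only [pow_one] using hpow 1
      _ ≤ v xmax * M := mul_le_mul_of_nonneg_left hvM (hv_nonneg xmax)
  have hSP : v xmax ^ 2 ≤ M ^ 2 + 2 * ∫ x in (0:ℝ)..1, |v x * deriv v x| := by
    have := sq_le_sq_integral_add_integral_abs_mul_deriv (hv.of_le one_le_two) hv_nonneg hxmax
    nlinarith
  have hψ : |∫ x in (0:ℝ)..1, f x * v x| ≤ |F| * M :=
    calc |∫ x in (0:ℝ)..1, f x * v x| ≤ ∫ x in (0:ℝ)..1, |f x * v x| :=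
          intervalIntegral.abs_integral_le_integral_abs zero_le_one
      _ ≤ ∫ x in (0:ℝ)..1, |F| * v x := by
          refine intervalIntegral.integral_mono_on zero_le_one
            ((hf.mul hv₀).abs.intervalIntegrable 0 1)
            ((continuous_const.mul hv₀).intervalIntegrable 0 1) fun x _ => ?_
          rw [abs_mul, abs_of_nonneg (hv_nonneg x)]
          exact mul_le_mul_of_nonneg_right ((hfF x).trans (le_abs_self F)) (hv_nonneg x)
      _ ≤ |F| * M := by
          rw [intervalIntegral.integral_const_mul]
          exact mul_le_mul_of_nonneg_left hvM (abs_nonneg F)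
  have hPQ : (∫ x in (0:ℝ)..1, |v x * deriv v x|) ^ 2
      ≤ (∫ x in (0:ℝ)..1, v x ^ 2) * ∫ x in (0:ℝ)..1, deriv v x ^ 2 := by
    simpa only [abs_mul, sq_abs] using sq_integral_mul_le_integral_sq_mul_integral_sq
      zero_le_one hv₀.abs (hv.continuous_deriv one_le_two).abs
  rw [hper.integral_mul_reaction_diffusion hv hf]
  exact energy_rate_neg (hv_nonneg xmax) hU hvM
    (intervalIntegral.integral_nonneg zero_le_one fun x _ => pow_nonneg (hv_nonneg x) 3)
    (hpow 2) hψ hES hSP hPQ hE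

theorem L2_uniform_bound_1d_diffusion_general
    (a α M F : ℝ) :
    ∃ C : ℝ, 0 < C ∧ ∀ f : ℝ → ℝ, ContDiff ℝ (⊤ : ℕ∞) f → (∀ x, f (x + 1) = f x) →
      (⨆ x : ℝ, |f x|) ≤ F →
      ∀ T : EReal, 0 < T →
      ∀ u : ℝ → ℝ → ℝ,
        ContDiffOn ℝ (⊤ : ℕ∞) (fun p : ℝ × ℝ => u p.1 p.2)
          {p : ℝ × ℝ | 0 ≤ p.1 ∧ (p.1 : EReal) < T} →
        (∀ t : ℝ, 0 ≤ t → (t : EReal) < T → ∀ x, u t (x + 1) = u t x) →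
        (∀ t : ℝ, 0 ≤ t → (t : EReal) < T → ∀ x, 0 ≤ u t x) →
        (∀ t : ℝ, 0 ≤ t → (t : EReal) < T → 0 ≤ ∫ x in (0:ℝ)..1, u t x) →
        (∀ t : ℝ, 0 ≤ t → (t : EReal) < T → (∫ x in (0:ℝ)..1, u t x) ≤ M) →
        (∀ t : ℝ, 0 ≤ t → (t : EReal) < T → ∀ x,
          derivWithin (fun s => u s x) (Set.Ici 0) t
            = (a * u t x ^ 2 + α * f x) * (M - ∫ y in (0:ℝ)..1, u t y) - u t x + iteratedDeriv 2 (u t) x) →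
        ∀ t : ℝ, 0 ≤ t → (t : EReal) < T →
          (∫ x in (0:ℝ)..1, (u t x) ^ 2)
            ≤ max (∫ x in (0:ℝ)..1, (u 0 x) ^ 2) C := by
  refine ⟨energyBound a α M F, energyBound_pos a α M F, ?_⟩
  intro f hf hf_per hfF T _ u hu hu_per hu_nonneg _ huM hPDE τ hτ hτT
  obtain ⟨τ', hττ', hτ'T⟩ := EReal.exists_between_coe_real hτT
  have hτ' : ∀ {t : ℝ}, t < τ' → (t : EReal) < T := fun ht => (EReal.coe_lt_coe_iff.2 ht).trans hτ'T
  have hτ'τ : τ < τ' := EReal.coe_lt_coe_iff.1 hττ'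
  have hslice : ∀ t, 0 ≤ t → t < τ' → ContDiff ℝ 2 (u t) := fun t ht htτ' =>
    contDiffOn_univ.1 ((hu.comp (contDiff_prodMk_right t).contDiffOn
      fun x _ => ⟨ht, hτ' htτ'⟩).of_le (WithTop.coe_le_coe.2 le_top))
  have hopen : ContDiffOn ℝ 1 (uncurry u) (Ioo 0 τ' ×ˢ univ) :=
    (hu.mono fun p (hp : p ∈ Ioo 0 τ' ×ˢ univ) => ⟨hp.1.1.le, hτ' hp.1.2⟩).of_le
      (WithTop.coe_le_coe.2 le_top)
  have hcont : ContinuousOn (uncurry fun t x => u t x ^ 2) (Icc 0 τ ×ˢ univ) :=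
    (hu.continuousOn.pow 2).mono fun p (hp : p ∈ Icc 0 τ ×ˢ univ) =>
      ⟨hp.1.1, hτ' (hp.1.2.trans_lt hτ'τ)⟩
  refine le_max_of_hasDerivAt_neg hτ (continuousOn_intervalIntegral_of_continuousOn_prod hcont)
    fun t ht hE => ?_
  have ht' : t ∈ Ioo 0 τ' := ⟨ht.1, ht.2.trans hτ'τ⟩
  have hut : 0 ≤ t ∧ (t : EReal) < T := ⟨ht.1.le, hτ' ht'.2⟩
  refine ⟨_, Periodic.integral_mul_reaction_diffusion_neg (hu_per t hut.1 hut.2)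
    (hslice t hut.1 ht'.2) (hu_nonneg t hut.1 hut.2) (huM t hut.1 hut.2) hf.continuous
    (Periodic.abs_le_of_iSup_abs_le hf_per one_ne_zero hf.continuous hfF) hE, ?_⟩
  convert hasDerivAt_intervalIntegral_sq_of_contDiffOn isOpen_Ioo hopen ht' using 1
  refine intervalIntegral.integral_congr fun x _ => ?_
  rw [← derivWithin_of_mem_nhds (Ici_mem_nhds ht.1), hPDE t hut.1 hut.2 x]

/-- uniform-in-time `L²` bound for the 1D equation with diffusion,
with a constant depending only on `a, α, M` and `sup |f|`. -/
theorem L2_uniform_bound_1d_diffusion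
    (a α M F : ℝ) (ha : 0 < a) (hα : 0 ≤ α) (hM : 0 < M) :
    ∃ C : ℝ, 0 < C ∧ ∀ f : ℝ → ℝ, ContDiff ℝ (⊤ : ℕ∞) f → (∀ x, f (x + 1) = f x) →
      (⨆ x : ℝ, |f x|) ≤ F →
      ∀ T : EReal, 0 < T →
      ∀ u : ℝ → ℝ → ℝ,
        ContDiffOn ℝ (⊤ : ℕ∞) (fun p : ℝ × ℝ => u p.1 p.2)
          {p : ℝ × ℝ | 0 ≤ p.1 ∧ (p.1 : EReal) < T} →
        (∀ t : ℝ, 0 ≤ t → (t : EReal) < T → ∀ x, u t (x + 1) = u t x) →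
        (∀ t : ℝ, 0 ≤ t → (t : EReal) < T → ∀ x, 0 ≤ u t x) →
        (∀ t : ℝ, 0 ≤ t → (t : EReal) < T → 0 ≤ ∫ x in (0:ℝ)..1, u t x) →
        (∀ t : ℝ, 0 ≤ t → (t : EReal) < T → (∫ x in (0:ℝ)..1, u t x) ≤ M) →
        (∀ t : ℝ, 0 ≤ t → (t : EReal) < T → ∀ x,
          derivWithin (fun s => u s x) (Set.Ici 0) t
            = (a * u t x ^ 2 + α * f x) * (M - ∫ y in (0:ℝ)..1, u t y) - u t x + iteratedDeriv 2 (u t) x) →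
        ∀ t : ℝ, 0 ≤ t → (t : EReal) < T →
          (∫ x in (0:ℝ)..1, (u t x) ^ 2)
            ≤ max (∫ x in (0:ℝ)..1, (u 0 x) ^ 2) C :=
  L2_uniform_bound_1d_diffusion_general a α M F
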